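/- Let A, B be n×n positive definite complex matrices and define d(A,B)² := Tr(log((A+B)/2)) - (1/2)Tr(log A) - (1/2)Tr(log B). Then d(A,B)² ≥ 0, and d(A,B)² = 0 if and only if A = B. -/

import Mathlib

open scoped BigOperators ComplexOrder
open Matrix

open Classical in
noncomputable def trFun {I : Type*} [Fintype I] [DecidableEq I]
    (f : ℝ → ℝ) (A : Matrix I I ℂ) : ℝ :=
  if hA : A.IsHermitian then ∑ i, f (hA.eigenvalues i) else 0

open Classical in
noncomputable def psqrt {I : Type*} [Fintype I] [DecidableEq I]
    (A : Matrix I I ℂ) : Matrix I I ℂ :=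
  if hA : A.PosSemidef then
    (hA.1.eigenvectorUnitary : Matrix I I ℂ) * diagonal ((↑) ∘ (√·) ∘ hA.1.eigenvalues) *
      (star hA.1.eigenvectorUnitary : Matrix I I ℂ)
  else 0

noncomputable def geoMean {I : Type*} [Fintype I] [DecidableEq I]
    (A B : Matrix I I ℂ) : Matrix I I ℂ :=
  psqrt A * psqrt ((psqrt A)⁻¹ * B * (psqrt A)⁻¹) * psqrt A

noncomputable def dsqLog {I : Type*} [Fintype I] [DecidableEq I]
    (A B : Matrix I I ℂ) : ℝ :=
  trFun Real.log (((1 : ℝ) / 2) • (A + B))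
    - (1 / 2) * trFun Real.log A - (1 / 2) * trFun Real.log B

noncomputable def Jdiv {I : Type*} [Fintype I] [DecidableEq I]
    (A B : Matrix I I ℂ) : ℝ :=
  (1 / 2) * trFun (fun x => x * Real.log x) A
    + (1 / 2) * trFun (fun x => x * Real.log x) B
    - trFun (fun x => x * Real.log x) (((1 : ℝ) / 2) • (A + B))

lemma posDef_real_smul {n : ℕ} {M : Matrix (Fin n) (Fin n) ℂ} (hM : M.PosDef)
    {r : ℝ} (hr : 0 < r) : (r • M).PosDef := by
  refine PosDef.of_dotProduct_mulVec_pos ?_ fun x hx => ?_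
  · unfold Matrix.IsHermitian
    rw [conjTranspose_smul, hM.1.eq]
    norm_num
  · have h := hM.dotProduct_mulVec_pos hx
    rw [smul_mulVec, dotProduct_smul]
    exact smul_pos hr h

lemma posDef_conj {n : ℕ} {B N : Matrix (Fin n) (Fin n) ℂ} (hB : B.PosDef)
    (hN : IsUnit N) : (Nᴴ * B * N).PosDef := by
  refine PosDef.of_dotProduct_mulVec_pos (isHermitian_conjTranspose_mul_mul N hB.1) fun x hx => ?_
  have hinj : Function.Injective N.mulVec := mulVec_injective_iff_isUnit.mpr hN
  have hNx : N *ᵥ x ≠ 0 := by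
    intro h
    exact hx (hinj (by simpa using h))
  simpa only [star_mulVec, dotProduct_mulVec, vecMul_vecMul] using hB.dotProduct_mulVec_pos hNx

lemma trFun_log_posDef {n : ℕ} {P : Matrix (Fin n) (Fin n) ℂ} (hP : P.PosDef) :
    trFun Real.log P = Real.log (∏ i, hP.1.eigenvalues i) := by
  rw [trFun, dif_pos hP.1, Real.log_prod]
  exact fun i _ => (hP.eigenvalues_pos i).ne'

set_option maxHeartbeats 1000000 in
theorem dsqLog_nonneg_and_eq_zero_iff {n : ℕ} (A B : Matrix (Fin n) (Fin n) ℂ)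
    (hA : A.PosDef) (hB : B.PosDef) :
    0 ≤ dsqLog A B ∧ (dsqLog A B = 0 ↔ A = B) := by
  -- square root of A
  open scoped MatrixOrder in set S := CFC.sqrt A with hSdef
  open scoped MatrixOrder in have hS : S.PosSemidef := (CFC.sqrt_nonneg A).posSemidef
  open scoped MatrixOrder in have hSS : S * S = A := CFC.sqrt_mul_sqrt_self A hA.posSemidef.nonneg
  have hdetSS : S.det * S.det = A.det := by rw [← det_mul, hSS]
  have hdetS : IsUnit S.det := by
    refine isUnit_iff_ne_zero.mpr fun h0 => hA.det_pos.ne' ?_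
    rw [← hdetSS, h0, mul_zero]
  have hS1 : S * S⁻¹ = 1 := mul_nonsing_inv _ hdetS
  have hS1' : S⁻¹ * S = 1 := nonsing_inv_mul _ hdetS
  have hSHinv : S⁻¹.IsHermitian := hS.1.inv
  set X := S⁻¹ * B * S⁻¹ with hXdef
  have hSinvUnit : IsUnit S⁻¹ := by
    refine (isUnit_iff_isUnit_det _).mpr ?_
    rw [det_nonsing_inv, Ring.inverse_eq_inv]
    exact hdetS.inv
  have hX : X.PosDef := by
    have h := posDef_conj hB hSinvUnit
    rwa [hSHinv.eq] at h
  set U : Matrix (Fin n) (Fin n) ℂ := ↑(hX.1.eigenvectorUnitary) with hUdef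
  set μ : Fin n → ℝ := hX.1.eigenvalues with hμdef
  have hspec : X = U * diagonal (RCLike.ofReal ∘ μ) * star U := hX.1.spectral_theorem
  have hU : U * star U = 1 := Matrix.mem_unitaryGroup_iff.mp (hX.1.eigenvectorUnitary).2
  have hμ : ∀ i, 0 < μ i := hX.eigenvalues_pos
  have hBX : B = S * X * S := by
    rw [hXdef, show S * (S⁻¹ * B * S⁻¹) * S = (S * S⁻¹) * B * (S⁻¹ * S) by
      simp only [Matrix.mul_assoc], hS1, hS1', one_mul, mul_one]
  have hAB : A + B = S * ((1 : Matrix (Fin n) (Fin n) ℂ) + X) * S := by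
    rw [hBX]
    nth_rewrite 1 [← hSS]
    noncomm_ring
  have h1X : (1 : Matrix (Fin n) (Fin n) ℂ) + X
      = U * diagonal (RCLike.ofReal ∘ fun i => 1 + μ i) * star U := by
    conv_lhs => rw [hspec, ← hU]
    rw [show U * star U + U * diagonal (RCLike.ofReal ∘ μ) * star U
        = U * ((1 : Matrix (Fin n) (Fin n) ℂ) + diagonal (RCLike.ofReal ∘ μ)) * star U by
      noncomm_ring]
    congr 1
    congr 1
    ext i j
    by_cases h : i = j
    · subst h
      simp [Matrix.add_apply, Matrix.diagonal_apply_eq, Matrix.one_apply_eq]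
    · simp [Matrix.add_apply, Matrix.diagonal_apply_ne _ h, Matrix.one_apply_ne h]
  have hdiag : ((1:ℝ)/2) • diagonal (RCLike.ofReal ∘ fun i => 1 + μ i : Fin n → ℂ)
      = diagonal (RCLike.ofReal ∘ fun i => (1 + μ i)/2) := by
    ext i j
    by_cases h : i = j
    · subst h
      simp only [Matrix.smul_apply, Matrix.diagonal_apply_eq, Function.comp_apply,
        RCLike.real_smul_eq_coe_mul, ← RCLike.ofReal_mul]
      congr 1
      ring
    · simp [Matrix.diagonal_apply_ne _ h]
  have hM_eq : ((1:ℝ)/2) • (A + B)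
      = S * (U * diagonal (RCLike.ofReal ∘ fun i => (1 + μ i)/2) * star U) * S := by
    rw [hAB, h1X, ← hdiag]
    simp only [smul_mul_assoc, mul_smul_comm]
  have hdetconj : ∀ d : Fin n → ℂ, (U * diagonal d * star U).det = ∏ i, d i := by
    intro d
    have h1 : U.det * (star U).det = 1 := by rw [← det_mul, hU, det_one]
    rw [det_mul, det_mul, det_diagonal,
      show U.det * (∏ i, d i) * (star U).det = (∏ i, d i) * (U.det * (star U).det) by ring,
      h1, mul_one]
  have hdetM : (((1:ℝ)/2) • (A + B)).det
      = A.det * ((∏ i, (1 + μ i)/2 : ℝ) : ℂ) := by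
    rw [hM_eq, det_mul, det_mul, hdetconj]
    simp only [Function.comp_apply, ← RCLike.ofReal_prod]
    rw [mul_right_comm, hdetSS]
    rfl
  have hdetB : B.det = A.det * ((∏ i, μ i : ℝ) : ℂ) := by
    rw [hBX, hspec, det_mul, det_mul, hdetconj]
    simp only [Function.comp_apply, ← RCLike.ofReal_prod]
    rw [mul_right_comm, hdetSS]
    rfl
  -- positive definiteness of the midpoint
  have hM : (((1:ℝ)/2) • (A + B)).PosDef := posDef_real_smul (hA.add hB) (by norm_num)
  -- eigenvalue products
  set pA := ∏ i, hA.1.eigenvalues i with hpAdef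
  set pB := ∏ i, hB.1.eigenvalues i with hpBdef
  set pM := ∏ i, hM.1.eigenvalues i with hpMdef
  have hpA : (pA : ℂ) = A.det := by
    rw [hA.1.det_eq_prod_eigenvalues, hpAdef]
    push_cast
    rfl
  have hpB : (pB : ℂ) = B.det := by
    rw [hB.1.det_eq_prod_eigenvalues, hpBdef]
    push_cast
    rfl
  have hpM : (pM : ℂ) = (((1:ℝ)/2) • (A + B)).det := by
    rw [hM.1.det_eq_prod_eigenvalues, hpMdef]
    push_cast
    rfl
  have hpApos : 0 < pA := Finset.prod_pos fun i _ => hA.eigenvalues_pos i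
  have hpBpos : 0 < pB := Finset.prod_pos fun i _ => hB.eigenvalues_pos i
  have hpMpos : 0 < pM := Finset.prod_pos fun i _ => hM.eigenvalues_pos i
  set c := ∏ i, (1 + μ i)/2 with hcdef
  set p := ∏ i, μ i with hpdef
  set q := ∏ i, Real.sqrt (μ i) with hqdef
  have hcpos : 0 < c := Finset.prod_pos fun i _ => by have := hμ i; positivity
  have hppos : 0 < p := Finset.prod_pos fun i _ => hμ i
  have hqpos : 0 < q := Finset.prod_pos fun i _ => Real.sqrt_pos.mpr (hμ i)
  have hMc : pM = pA * c := by
    have h := hdetM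
    rw [← hpM, ← hpA] at h
    exact_mod_cast h
  have hBp : pB = pA * p := by
    have h := hdetB
    rw [← hpB, ← hpA] at h
    exact_mod_cast h
  have hq2 : q * q = p := by
    rw [hqdef, hpdef, ← Finset.prod_mul_distrib]
    exact Finset.prod_congr rfl fun i _ => Real.mul_self_sqrt (hμ i).le
  have amgm : ∀ i, Real.sqrt (μ i) ≤ (1 + μ i)/2 := fun i => by
    nlinarith [Real.sq_sqrt (hμ i).le, sq_nonneg (Real.sqrt (μ i) - 1)]
  have hqc : q ≤ c :=
    Finset.prod_le_prod (fun i _ => (Real.sqrt_nonneg _)) (fun i _ => amgm i)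
  -- the value of dsqLog
  have key : dsqLog A B = Real.log c - Real.log q := by
    rw [dsqLog, trFun_log_posDef hA, trFun_log_posDef hB, trFun_log_posDef hM,
      ← hpAdef, ← hpBdef, ← hpMdef, hMc, hBp, ← hq2,
      Real.log_mul hpApos.ne' hcpos.ne', Real.log_mul hpApos.ne' (by positivity),
      Real.log_mul hqpos.ne' hqpos.ne']
    ring
  have hnonneg : 0 ≤ dsqLog A B := by
    rw [key, sub_nonneg]
    exact (Real.log_le_log_iff hqpos hcpos).mpr hqc
  refine ⟨hnonneg, ?_, ?_⟩
  · -- dsqLog = 0 → A = B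
    intro h0
    have hcq : c = q := by
      have := key.symm.trans h0
      have hlog : Real.log c = Real.log q := by linarith
      exact Real.log_injOn_pos (Set.mem_Ioi.mpr hcpos) (Set.mem_Ioi.mpr hqpos) hlog
    have hall : ∀ i, μ i = 1 := by
      by_contra hcon
      push_neg at hcon
      obtain ⟨j, hj⟩ := hcon
      have hne : Real.sqrt (μ j) - 1 ≠ 0 := by
        intro h
        exact hj (by nlinarith [Real.sq_sqrt (hμ j).le])
      have hlt : Real.sqrt (μ j) < (1 + μ j)/2 := by
        have h2 : 0 < (Real.sqrt (μ j) - 1)^2 := by positivity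
        nlinarith [Real.sq_sqrt (hμ j).le]
      have : q < c := Finset.prod_lt_prod (fun i _ => Real.sqrt_pos.mpr (hμ i))
        (fun i _ => amgm i) ⟨j, Finset.mem_univ j, hlt⟩
      exact absurd hcq this.ne'
    have hX1 : X = 1 := by
      have hD1 : diagonal (RCLike.ofReal ∘ μ : Fin n → ℂ) = 1 := by
        rw [show (RCLike.ofReal ∘ μ : Fin n → ℂ) = fun _ => 1 by
          funext i; simp [hall i], diagonal_one]
      rw [hspec, hD1, mul_one, hU]
    rw [hBX, hX1, mul_one, hSS]
  · -- A = B → dsqLog = 0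
    intro h
    subst h
    have hAA : ((1:ℝ)/2) • (A + A) = A := by
      rw [← two_smul ℝ A, smul_smul]
      norm_num
    rw [dsqLog, hAA]
    ring
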